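/- arXiv:2204.04586 — 4 statements merged into one kernel-verified Lean document; each statement's English description precedes it below -/
import Mathlib

section
/- Let H₁ and H₂ be complex Hilbert spaces each containing a nonzero vector, (X₁,μ₁) and (X₂,μ₂) measure spaces with σ-finite positive measures, and let F₁ : X₁ → H₁ and F₂ : X₂ → H₂ be weakly measurable mappings. Suppose there exist constants 0 < A ≤ B < ∞ such that for all f ∈ H₁ and g ∈ H₂, A ‖f‖₁² ‖g‖₂² ≤ ∫_{X₁ × X₂} |⟨f, F₁(x₁)⟩₁|² |⟨g, F₂(x₂)⟩₂|² d(μ₁ × μ₂)(x₁,x₂) ≤ B ‖f‖₁² ‖g‖₂². Then F₁ is a continuous frame for H₁ with respect to (X₁,μ₁) (i.e. there exist constants 0 < A₁ ≤ B₁ < ∞ with A₁‖f‖₁² ≤ ∫_{X₁} |⟨f, F₁(x₁)⟩₁|² dμ₁(x₁) ≤ B₁‖f‖₁² for all f ∈ H₁) and F₂ is a continuous frame for H₂ with respect to (X₂,μ₂). -/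
open MeasureTheory
open scoped ComplexInnerProductSpace

/-- If `H₁, H₂` are nontrivial Hilbert spaces and the tensor product
mapping `F₁ ⊗ F₂` of weakly measurable `F₁, F₂` satisfies the continuous frame
inequality on elementary tensors with bounds `A, B`, then both `F₁` and `F₂` are
continuous frames for their respective spaces. -/
theorem factors_of_tensor_product_continuous_frame
    {H₁ : Type*} [NormedAddCommGroup H₁] [InnerProductSpace ℂ H₁] [CompleteSpace H₁]
    [Nontrivial H₁]
    {H₂ : Type*} [NormedAddCommGroup H₂] [InnerProductSpace ℂ H₂] [CompleteSpace H₂]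
    [Nontrivial H₂]
    {X₁ : Type*} [MeasurableSpace X₁] (μ₁ : Measure X₁) [SigmaFinite μ₁]
    {X₂ : Type*} [MeasurableSpace X₂] (μ₂ : Measure X₂) [SigmaFinite μ₂]
    (F₁ : X₁ → H₁) (F₂ : X₂ → H₂)
    (hmeas₁ : ∀ f : H₁, Measurable fun x => ⟪f, F₁ x⟫)
    (hmeas₂ : ∀ g : H₂, Measurable fun x => ⟪g, F₂ x⟫)
    (A B : ℝ) (hA : 0 < A) (hAB : A ≤ B)
    (hframe : ∀ (f : H₁) (g : H₂),
      A * (‖f‖ ^ 2 * ‖g‖ ^ 2) ≤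
        ∫ x, ‖⟪f, F₁ x.1⟫‖ ^ 2 * ‖⟪g, F₂ x.2⟫‖ ^ 2 ∂(μ₁.prod μ₂) ∧
      ∫ x, ‖⟪f, F₁ x.1⟫‖ ^ 2 * ‖⟪g, F₂ x.2⟫‖ ^ 2 ∂(μ₁.prod μ₂) ≤
        B * (‖f‖ ^ 2 * ‖g‖ ^ 2)) :
    (∃ A₁ B₁ : ℝ, 0 < A₁ ∧ A₁ ≤ B₁ ∧
      ∀ f : H₁, A₁ * ‖f‖ ^ 2 ≤ ∫ x, ‖⟪f, F₁ x⟫‖ ^ 2 ∂μ₁ ∧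
        ∫ x, ‖⟪f, F₁ x⟫‖ ^ 2 ∂μ₁ ≤ B₁ * ‖f‖ ^ 2) ∧
    (∃ A₂ B₂ : ℝ, 0 < A₂ ∧ A₂ ≤ B₂ ∧
      ∀ g : H₂, A₂ * ‖g‖ ^ 2 ≤ ∫ x, ‖⟪g, F₂ x⟫‖ ^ 2 ∂μ₂ ∧
        ∫ x, ‖⟪g, F₂ x⟫‖ ^ 2 ∂μ₂ ≤ B₂ * ‖g‖ ^ 2) := by
  obtain ⟨f₀, hf₀⟩ := exists_ne (0 : H₁)
  obtain ⟨g₀, hg₀⟩ := exists_ne (0 : H₂)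
  have key : ∀ (f : H₁) (g : H₂),
      (∫ x, ‖⟪f, F₁ x.1⟫‖ ^ 2 * ‖⟪g, F₂ x.2⟫‖ ^ 2 ∂(μ₁.prod μ₂))
        = (∫ x, ‖⟪f, F₁ x⟫‖ ^ 2 ∂μ₁) * (∫ x, ‖⟪g, F₂ x⟫‖ ^ 2 ∂μ₂) := fun f g =>
    integral_prod_mul (fun x => ‖⟪f, F₁ x⟫‖ ^ 2) (fun x => ‖⟪g, F₂ x⟫‖ ^ 2)
  set I₁ : H₁ → ℝ := fun f => ∫ x, ‖⟪f, F₁ x⟫‖ ^ 2 ∂μ₁ with hI₁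
  set I₂ : H₂ → ℝ := fun g => ∫ x, ‖⟪g, F₂ x⟫‖ ^ 2 ∂μ₂ with hI₂
  have hnn₁ : ∀ f, 0 ≤ I₁ f := fun f => integral_nonneg fun x => by positivity
  have hnn₂ : ∀ g, 0 ≤ I₂ g := fun g => integral_nonneg fun x => by positivity
  have hf₀' : 0 < ‖f₀‖ := norm_pos_iff.mpr hf₀
  have hg₀' : 0 < ‖g₀‖ := norm_pos_iff.mpr hg₀
  have hpos : 0 < I₁ f₀ * I₂ g₀ := by
    have h := (hframe f₀ g₀).1
    rw [key] at h
    refine lt_of_lt_of_le ?_ h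
    exact mul_pos hA (mul_pos (pow_pos hf₀' 2) (pow_pos hg₀' 2))
  have h1pos : 0 < I₁ f₀ := by nlinarith [hnn₁ f₀, hnn₂ g₀]
  have h2pos : 0 < I₂ g₀ := by nlinarith [hnn₁ f₀, hnn₂ g₀]
  constructor
  · refine ⟨A * ‖g₀‖ ^ 2 / I₂ g₀, B * ‖g₀‖ ^ 2 / I₂ g₀,
      div_pos (mul_pos hA (pow_pos hg₀' 2)) h2pos, ?_, ?_⟩
    · gcongr
    · intro f
      obtain ⟨hl, hr⟩ := hframe f g₀
      rw [key] at hl hr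
      constructor
      · rw [div_mul_eq_mul_div, div_le_iff₀ h2pos]
        nlinarith [hl]
      · rw [div_mul_eq_mul_div, le_div_iff₀ h2pos]
        nlinarith [hr]
  · refine ⟨A * ‖f₀‖ ^ 2 / I₁ f₀, B * ‖f₀‖ ^ 2 / I₁ f₀,
      div_pos (mul_pos hA (pow_pos hf₀' 2)) h1pos, ?_, ?_⟩
    · gcongr
    · intro g
      obtain ⟨hl, hr⟩ := hframe f₀ g
      rw [key] at hl hr
      constructor
      · rw [div_mul_eq_mul_div, div_le_iff₀ h1pos]
        nlinarith [hl]
      · rw [div_mul_eq_mul_div, le_div_iff₀ h1pos]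
        nlinarith [hr]
end

section
/- Let H₁ and H₂ be complex Hilbert spaces, (X₁,μ₁) and (X₂,μ₂) measure spaces with σ-finite positive measures, F₁ : X₁ → H₁ a continuous frame for H₁ with frame operator S₁, and F₂ : X₂ → H₂ a continuous frame for H₂ with frame operator S₂. Then the frame operator of the tensor product frame F₁ ⊗ F₂ factorizes as S₁ ⊗ S₂; concretely, for all f, f' ∈ H₁ and g, g' ∈ H₂, ∫_{X₁ × X₂} ⟨f, F₁(x₁)⟩₁ ⟨g, F₂(x₂)⟩₂ ⟨F₁(x₁), f'⟩₁ ⟨F₂(x₂), g'⟩₂ d(μ₁ × μ₂)(x₁,x₂) = ⟨S₁ f, f'⟩₁ ⟨S₂ g, g'⟩₂. -/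
open MeasureTheory
open scoped ComplexInnerProductSpace

/-- The frame operator of a tensor product frame `F₁ ⊗ F₂` factorizes
as `S₁ ⊗ S₂`: on elementary tensors,
`⟨S_{F₁⊗F₂}(f ⊗ g), f' ⊗ g'⟩ = ⟨S₁ f, f'⟩⟨S₂ g, g'⟩`. -/
theorem tensor_product_frame_operator
    {H₁ : Type*} [NormedAddCommGroup H₁] [InnerProductSpace ℂ H₁] [CompleteSpace H₁]
    {H₂ : Type*} [NormedAddCommGroup H₂] [InnerProductSpace ℂ H₂] [CompleteSpace H₂]
    {X₁ : Type*} [MeasurableSpace X₁] (μ₁ : Measure X₁) [SigmaFinite μ₁]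
    {X₂ : Type*} [MeasurableSpace X₂] (μ₂ : Measure X₂) [SigmaFinite μ₂]
    (F₁ : X₁ → H₁) (F₂ : X₂ → H₂) (A B C D : ℝ)
    (hA : 0 < A) (hAB : A ≤ B) (hC : 0 < C) (hCD : C ≤ D)
    (hmeas₁ : ∀ f : H₁, Measurable fun x => ⟪f, F₁ x⟫)
    (hmeas₂ : ∀ g : H₂, Measurable fun x => ⟪g, F₂ x⟫)
    (hframe₁ : ∀ f : H₁, A * ‖f‖ ^ 2 ≤ ∫ x, ‖⟪f, F₁ x⟫‖ ^ 2 ∂μ₁ ∧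
      ∫ x, ‖⟪f, F₁ x⟫‖ ^ 2 ∂μ₁ ≤ B * ‖f‖ ^ 2)
    (hframe₂ : ∀ g : H₂, C * ‖g‖ ^ 2 ≤ ∫ x, ‖⟪g, F₂ x⟫‖ ^ 2 ∂μ₂ ∧
      ∫ x, ‖⟪g, F₂ x⟫‖ ^ 2 ∂μ₂ ≤ D * ‖g‖ ^ 2)
    (S₁ : H₁ →L[ℂ] H₁) (S₂ : H₂ →L[ℂ] H₂)
    (hS₁ : ∀ f f' : H₁, ⟪S₁ f, f'⟫ = ∫ x, ⟪f, F₁ x⟫ * ⟪F₁ x, f'⟫ ∂μ₁)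
    (hS₂ : ∀ g g' : H₂, ⟪S₂ g, g'⟫ = ∫ x, ⟪g, F₂ x⟫ * ⟪F₂ x, g'⟫ ∂μ₂) :
    ∀ (f f' : H₁) (g g' : H₂),
      ∫ x, ⟪f, F₁ x.1⟫ * ⟪g, F₂ x.2⟫ * ⟪F₁ x.1, f'⟫ * ⟪F₂ x.2, g'⟫ ∂(μ₁.prod μ₂) =
        ⟪S₁ f, f'⟫ * ⟪S₂ g, g'⟫ := by
  intro f f' g g'
  have h := MeasureTheory.integral_prod_mul (μ := μ₁) (ν := μ₂)
    (f := fun x => ⟪f, F₁ x⟫ * ⟪F₁ x, f'⟫) (g := fun y => ⟪g, F₂ y⟫ * ⟪F₂ y, g'⟫)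
  rw [hS₁, hS₂, ← h]
  congr 1
  ext x
  ring
end

section
/- Let H₁ and H₂ be complex Hilbert spaces, (X₁,μ₁) and (X₂,μ₂) measure spaces with σ-finite positive measures, and let F₁, G₁ : X₁ → H₁ and F₂, G₂ : X₂ → H₂ all be continuous Bessel mappings. Suppose G₁ is a dual of F₁, i.e. ⟨f, f'⟩₁ = ∫_{X₁} ⟨f, F₁(x₁)⟩₁ ⟨G₁(x₁), f'⟩₁ dμ₁(x₁) for all f, f' ∈ H₁, and G₂ is a dual of F₂, i.e. ⟨g, g'⟩₂ = ∫_{X₂} ⟨g, F₂(x₂)⟩₂ ⟨G₂(x₂), g'⟩₂ dμ₂(x₂) for all g, g' ∈ H₂. Then for all f, f' ∈ H₁ and g, g' ∈ H₂, ⟨f, f'⟩₁ ⟨g, g'⟩₂ = ∫_{X₁ × X₂} ⟨f, F₁(x₁)⟩₁ ⟨g, F₂(x₂)⟩₂ ⟨G₁(x₁), f'⟩₁ ⟨G₂(x₂), g'⟩₂ d(μ₁ × μ₂)(x₁,x₂); that is, G₁ ⊗ G₂ is a dual continuous frame of F₁ ⊗ F₂ on elementary tensors. -/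
open MeasureTheory
open scoped ComplexInnerProductSpace

/-- If `G₁` is a dual of the continuous Bessel mapping `F₁` and `G₂`
is a dual of the continuous Bessel mapping `F₂`, then `G₁ ⊗ G₂` is a dual of `F₁ ⊗ F₂`
on elementary tensors:
`⟨f,f'⟩₁⟨g,g'⟩₂ = ∫ ⟨f,F₁⟩⟨g,F₂⟩⟨G₁,f'⟩⟨G₂,g'⟩ d(μ₁ × μ₂)`. -/
theorem tensor_product_dual_continuous_frame
    {H₁ : Type*} [NormedAddCommGroup H₁] [InnerProductSpace ℂ H₁] [CompleteSpace H₁]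
    {H₂ : Type*} [NormedAddCommGroup H₂] [InnerProductSpace ℂ H₂] [CompleteSpace H₂]
    {X₁ : Type*} [MeasurableSpace X₁] (μ₁ : Measure X₁) [SigmaFinite μ₁]
    {X₂ : Type*} [MeasurableSpace X₂] (μ₂ : Measure X₂) [SigmaFinite μ₂]
    (F₁ G₁ : X₁ → H₁) (F₂ G₂ : X₂ → H₂) (BF₁ BG₁ BF₂ BG₂ : ℝ)
    (hmeasF₁ : ∀ f : H₁, Measurable fun x => ⟪f, F₁ x⟫)
    (hmeasG₁ : ∀ f : H₁, Measurable fun x => ⟪f, G₁ x⟫)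
    (hmeasF₂ : ∀ g : H₂, Measurable fun x => ⟪g, F₂ x⟫)
    (hmeasG₂ : ∀ g : H₂, Measurable fun x => ⟪g, G₂ x⟫)
    (hBF₁ : ∀ f : H₁, ∫ x, ‖⟪f, F₁ x⟫‖ ^ 2 ∂μ₁ ≤ BF₁ * ‖f‖ ^ 2)
    (hBG₁ : ∀ f : H₁, ∫ x, ‖⟪f, G₁ x⟫‖ ^ 2 ∂μ₁ ≤ BG₁ * ‖f‖ ^ 2)
    (hBF₂ : ∀ g : H₂, ∫ x, ‖⟪g, F₂ x⟫‖ ^ 2 ∂μ₂ ≤ BF₂ * ‖g‖ ^ 2)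
    (hBG₂ : ∀ g : H₂, ∫ x, ‖⟪g, G₂ x⟫‖ ^ 2 ∂μ₂ ≤ BG₂ * ‖g‖ ^ 2)
    (hdual₁ : ∀ f f' : H₁, ⟪f, f'⟫ = ∫ x, ⟪f, F₁ x⟫ * ⟪G₁ x, f'⟫ ∂μ₁)
    (hdual₂ : ∀ g g' : H₂, ⟪g, g'⟫ = ∫ x, ⟪g, F₂ x⟫ * ⟪G₂ x, g'⟫ ∂μ₂) :
    ∀ (f f' : H₁) (g g' : H₂),
      ⟪f, f'⟫ * ⟪g, g'⟫ =
        ∫ x, ⟪f, F₁ x.1⟫ * ⟪g, F₂ x.2⟫ * ⟪G₁ x.1, f'⟫ * ⟪G₂ x.2, g'⟫ ∂(μ₁.prod μ₂) := by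
  intro f f' g g'
  have h : (fun x : X₁ × X₂ => ⟪f, F₁ x.1⟫ * ⟪g, F₂ x.2⟫ * ⟪G₁ x.1, f'⟫ * ⟪G₂ x.2, g'⟫)
      = fun x : X₁ × X₂ =>
        (fun x₁ => ⟪f, F₁ x₁⟫ * ⟪G₁ x₁, f'⟫) x.1 * (fun x₂ => ⟪g, F₂ x₂⟫ * ⟪G₂ x₂, g'⟫) x.2 := by
    funext x; ring
  rw [h, MeasureTheory.integral_prod_mul (fun x₁ => ⟪f, F₁ x₁⟫ * ⟪G₁ x₁, f'⟫)
      (fun x₂ => ⟪g, F₂ x₂⟫ * ⟪G₂ x₂, g'⟫), ← hdual₁, ← hdual₂]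
end

section
/- Let H₁ and H₂ be complex Hilbert spaces, (X₁,μ₁) and (X₂,μ₂) measure spaces with σ-finite positive measures, F₁, G₁ : X₁ → H₁ and F₂, G₂ : X₂ → H₂ continuous Bessel mappings, and m₁ : X₁ → ℂ, m₂ : X₂ → ℂ measurable essentially bounded functions. Let M₁ : H₁ → H₁ be the continuous Bessel multiplier of F₁ and G₁ with respect to m₁ and M₂ : H₂ → H₂ the continuous Bessel multiplier of F₂ and G₂ with respect to m₂. Then the continuous Bessel multiplier of F₁ ⊗ F₂ and G₁ ⊗ G₂ with respect to m(x₁,x₂) = m₁(x₁) m₂(x₂) factorizes as M₁ ⊗ M₂; concretely, for all f, f' ∈ H₁ and g, g' ∈ H₂, ∫_{X₁ × X₂} m₁(x₁) m₂(x₂) ⟨f, F₁(x₁)⟩₁ ⟨g, F₂(x₂)⟩₂ ⟨G₁(x₁), f'⟩₁ ⟨G₂(x₂), g'⟩₂ d(μ₁ × μ₂)(x₁,x₂) = ⟨M₁ f, f'⟩₁ ⟨M₂ g, g'⟩₂. -/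
open MeasureTheory
open scoped ComplexInnerProductSpace

theorem tensor_product_bessel_multiplier_general
    {H₁ : Type*} [NormedAddCommGroup H₁] [InnerProductSpace ℂ H₁]
    {H₂ : Type*} [NormedAddCommGroup H₂] [InnerProductSpace ℂ H₂]
    {X₁ : Type*} [MeasurableSpace X₁] (μ₁ : Measure X₁) [SigmaFinite μ₁]
    {X₂ : Type*} [MeasurableSpace X₂] (μ₂ : Measure X₂) [SigmaFinite μ₂]
    (F₁ G₁ : X₁ → H₁) (F₂ G₂ : X₂ → H₂)
    (m₁ : X₁ → ℂ) (m₂ : X₂ → ℂ)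
    (M₁ : H₁ →L[ℂ] H₁) (M₂ : H₂ →L[ℂ] H₂)
    (hM₁ : ∀ f f' : H₁, ⟪M₁ f, f'⟫ = ∫ x, m₁ x * ⟪f, F₁ x⟫ * ⟪G₁ x, f'⟫ ∂μ₁)
    (hM₂ : ∀ g g' : H₂, ⟪M₂ g, g'⟫ = ∫ x, m₂ x * ⟪g, F₂ x⟫ * ⟪G₂ x, g'⟫ ∂μ₂) :
    ∀ (f f' : H₁) (g g' : H₂),
      ∫ x, m₁ x.1 * m₂ x.2 * ⟪f, F₁ x.1⟫ * ⟪g, F₂ x.2⟫ *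
          ⟪G₁ x.1, f'⟫ * ⟪G₂ x.2, g'⟫ ∂(μ₁.prod μ₂) =
        ⟪M₁ f, f'⟫ * ⟪M₂ g, g'⟫ := by
  intro f f' g g'
  rw [hM₁, hM₂, ← integral_prod_mul]
  congr 1 with x
  ring

/-- The continuous Bessel multiplier of `F₁ ⊗ F₂` and `G₁ ⊗ G₂` with
respect to `m(x₁,x₂) = m₁(x₁) m₂(x₂)` factorizes as `M₁ ⊗ M₂`: on elementary tensors,
`∫ m₁ m₂ ⟨f,F₁⟩⟨g,F₂⟩⟨G₁,f'⟩⟨G₂,g'⟩ d(μ₁ × μ₂) = ⟨M₁ f, f'⟩⟨M₂ g, g'⟩`. -/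
theorem tensor_product_bessel_multiplier
    {H₁ : Type*} [NormedAddCommGroup H₁] [InnerProductSpace ℂ H₁] [CompleteSpace H₁]
    {H₂ : Type*} [NormedAddCommGroup H₂] [InnerProductSpace ℂ H₂] [CompleteSpace H₂]
    {X₁ : Type*} [MeasurableSpace X₁] (μ₁ : Measure X₁) [SigmaFinite μ₁]
    {X₂ : Type*} [MeasurableSpace X₂] (μ₂ : Measure X₂) [SigmaFinite μ₂]
    (F₁ G₁ : X₁ → H₁) (F₂ G₂ : X₂ → H₂) (BF₁ BG₁ BF₂ BG₂ : ℝ)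
    (hmeasF₁ : ∀ f : H₁, Measurable fun x => ⟪f, F₁ x⟫)
    (hmeasG₁ : ∀ f : H₁, Measurable fun x => ⟪f, G₁ x⟫)
    (hmeasF₂ : ∀ g : H₂, Measurable fun x => ⟪g, F₂ x⟫)
    (hmeasG₂ : ∀ g : H₂, Measurable fun x => ⟪g, G₂ x⟫)
    (hBF₁ : ∀ f : H₁, ∫ x, ‖⟪f, F₁ x⟫‖ ^ 2 ∂μ₁ ≤ BF₁ * ‖f‖ ^ 2)
    (hBG₁ : ∀ f : H₁, ∫ x, ‖⟪f, G₁ x⟫‖ ^ 2 ∂μ₁ ≤ BG₁ * ‖f‖ ^ 2)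
    (hBF₂ : ∀ g : H₂, ∫ x, ‖⟪g, F₂ x⟫‖ ^ 2 ∂μ₂ ≤ BF₂ * ‖g‖ ^ 2)
    (hBG₂ : ∀ g : H₂, ∫ x, ‖⟪g, G₂ x⟫‖ ^ 2 ∂μ₂ ≤ BG₂ * ‖g‖ ^ 2)
    (m₁ : X₁ → ℂ) (m₂ : X₂ → ℂ)
    (hm₁meas : Measurable m₁) (hm₂meas : Measurable m₂)
    (hm₁ : MemLp m₁ ⊤ μ₁) (hm₂ : MemLp m₂ ⊤ μ₂)
    (M₁ : H₁ →L[ℂ] H₁) (M₂ : H₂ →L[ℂ] H₂)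
    (hM₁ : ∀ f f' : H₁, ⟪M₁ f, f'⟫ = ∫ x, m₁ x * ⟪f, F₁ x⟫ * ⟪G₁ x, f'⟫ ∂μ₁)
    (hM₂ : ∀ g g' : H₂, ⟪M₂ g, g'⟫ = ∫ x, m₂ x * ⟪g, F₂ x⟫ * ⟪G₂ x, g'⟫ ∂μ₂) :
    ∀ (f f' : H₁) (g g' : H₂),
      ∫ x, m₁ x.1 * m₂ x.2 * ⟪f, F₁ x.1⟫ * ⟪g, F₂ x.2⟫ *
          ⟪G₁ x.1, f'⟫ * ⟪G₂ x.2, g'⟫ ∂(μ₁.prod μ₂) =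
        ⟪M₁ f, f'⟫ * ⟪M₂ g, g'⟫ :=
  tensor_product_bessel_multiplier_general μ₁ μ₂ F₁ G₁ F₂ G₂ m₁ m₂ M₁ M₂ hM₁ hM₂
end
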